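/- arXiv:2104.05839 — 2 statements merged into one kernel-verified Lean document; each statement's English description precedes it below -/
import Mathlib

section
/- Let a be a real number with 1/2 < a ≤ 2/3 and let p be a real number with p > 0. Then a^(log₂(1+p)) + a^(log₂(1+1/p)) ≤ 2a; that is, the function f(p) = a^(log₂(1+p)) + a^(log₂(1+1/p)) on (0,∞) attains its maximum value 2a at p = 1. -/
/-!
Since `a ^ log₂ x = x ^ log₂ a`, both summands are powers `s ^ r`, `t ^ r` with the common
exponent `r = -log₂ a ∈ [0, 1]` of `s = 1/(1+p)` and `t = p/(1+p)`, which satisfy `s + t = 1`.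
Concavity of `x ↦ x ^ r` bounds the sum by `2 (1/2) ^ r = 2a`.
-/

open Real

namespace Real

lemma rpow_logb_comm {b a x : ℝ} (ha : 0 < a) (hx : 0 < x) :
    a ^ logb b x = x ^ logb b a := by
  rw [rpow_def_of_pos ha, rpow_def_of_pos hx, logb, logb]
  ring_nf

lemma rpow_logb_eq_inv_rpow_neg {b a x : ℝ} (ha : 0 < a) (hx : 0 < x) :
    a ^ logb b x = x⁻¹ ^ (-logb b a) := by
  rw [rpow_logb_comm ha hx, inv_rpow hx.le, ← rpow_neg hx.le, neg_neg]

lemma rpow_add_rpow_le_two_mul_rpow_half_add {r s t : ℝ} (hr₀ : 0 ≤ r) (hr₁ : r ≤ 1)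
    (hs : 0 ≤ s) (ht : 0 ≤ t) : s ^ r + t ^ r ≤ 2 * ((s + t) / 2) ^ r := by
  have h := (concaveOn_rpow hr₀ hr₁).2 (Set.mem_Ici.mpr hs) (Set.mem_Ici.mpr ht)
    (by norm_num : (0 : ℝ) ≤ 1 / 2) (by norm_num : (0 : ℝ) ≤ 1 / 2) (by norm_num)
  simp only [smul_eq_mul] at h
  rw [show 1 / 2 * s + 1 / 2 * t = (s + t) / 2 by ring] at h
  linarith

lemma rpow_logb_two_one_add_add_le {a p : ℝ} (ha₁ : 1 / 2 ≤ a) (ha₂ : a ≤ 1) (hp : 0 < p) :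
    a ^ logb 2 (1 + p) + a ^ logb 2 (1 + 1 / p) ≤ 2 * a := by
  have ha : 0 < a := by linarith
  have hr₀ : 0 ≤ -logb 2 a := neg_nonneg.mpr (logb_nonpos one_lt_two ha.le ha₂)
  have hr₁ : -logb 2 a ≤ 1 := by
    rw [neg_le, le_logb_iff_rpow_le one_lt_two ha, rpow_neg_one]
    linarith
  have hsum : (1 + p)⁻¹ + (1 + 1 / p)⁻¹ = 1 := by
    field_simp
    ring
  calc a ^ logb 2 (1 + p) + a ^ logb 2 (1 + 1 / p)
      = (1 + p)⁻¹ ^ (-logb 2 a) + (1 + 1 / p)⁻¹ ^ (-logb 2 a) := by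
        rw [rpow_logb_eq_inv_rpow_neg ha (by positivity),
          rpow_logb_eq_inv_rpow_neg ha (by positivity)]
    _ ≤ 2 * (1 / 2 : ℝ) ^ (-logb 2 a) := by
        simpa only [hsum] using
          rpow_add_rpow_le_two_mul_rpow_half_add hr₀ hr₁ (s := (1 + p)⁻¹) (t := (1 + 1 / p)⁻¹)
            (by positivity) (by positivity)
    _ = 2 * a := by
        rw [one_div, ← rpow_logb_eq_inv_rpow_neg ha two_pos, logb_self_eq_one one_lt_two,
          rpow_one]

end Real

/-- For a real `a` with `1/2 < a ≤ 2/3`, the function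
`f(p) = a^(log₂(1+p)) + a^(log₂(1+1/p))` on `(0,∞)` attains its maximum value `2a`
at `p = 1`: every value is `≤ 2a`, and the value at `p = 1` equals `2a`. -/
theorem stmt3 (a : ℝ) (ha₁ : 1 / 2 < a) (ha₂ : a ≤ 2 / 3) :
    (∀ p : ℝ, 0 < p →
      a ^ Real.logb 2 (1 + p) + a ^ Real.logb 2 (1 + 1 / p) ≤ 2 * a) ∧
    a ^ Real.logb 2 (1 + (1 : ℝ)) + a ^ Real.logb 2 (1 + 1 / (1 : ℝ)) = 2 * a := by
  refine ⟨fun p hp => rpow_logb_two_one_add_add_le ha₁.le (by linarith) hp, ?_⟩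
  norm_num [logb_self_eq_one one_lt_two]
  ring
end

section
/- Let T = R_{2r+1}(P^1, …, P^{2r+1}) be the composition of tournaments P^1, …, P^{2r+1} over the highly regular tournament R_{2r+1}, with r ≥ 1, and let d_i = dim(P^i) for each i. Then dim(T) = max over i ∈ {1, …, 2r+1} of (d_i + d_{i+1} + … + d_{i+r} + r), where indices are taken modulo 2r+1. -/
/-- A tournament: an irreflexive relation such that for every pair of distinct
vertices exactly one of the two directions holds. -/
def IsTournament {V : Type*} (rel : V → V → Prop) : Prop :=
  (∀ v, ¬ rel v v) ∧ ∀ u v : V, u ≠ v → (rel u v ↔ ¬ rel v u)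

/-- A set `S` is acyclic (transitive) in a tournament `rel`: the relation restricted
to `S` is transitive; for a tournament this is equivalent to the restriction being a
strict linear order, i.e. to the induced subtournament having no directed cycle. -/
def AcyclicIn {V : Type*} (rel : V → V → Prop) (S : Set V) : Prop :=
  ∀ a ∈ S, ∀ b ∈ S, ∀ c ∈ S, rel a b → rel b c → rel a c

/-- The (acyclic) chromatic number: the least `k` such that there is a coloring of the
vertices with `k` colors all of whose color classes are acyclic sets. -/
noncomputable def chromaticNumber {V : Type*} (rel : V → V → Prop) : ℕ :=
  sInf {k : ℕ | ∃ c : V → Fin k, ∀ i : Fin k, AcyclicIn rel {v | c v = i}}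

/-- The dimension of the acyclic complex of a tournament: the maximum size of an
acyclic set, minus one. -/
noncomputable def acyDim {V : Type*} (rel : V → V → Prop) : ℕ :=
  sSup {n : ℕ | ∃ S : Finset V, AcyclicIn rel ↑S ∧ S.card = n} - 1

/-- The edge relation of the highly regular tournament `R_{2r+1}` on `ZMod (2r+1)`:
`i → j` iff `j ≡ i + l (mod 2r+1)` for some `1 ≤ l ≤ r`. -/
def hrRel (r : ℕ) (i j : ZMod (2 * r + 1)) : Prop :=
  ∃ l : ℕ, 1 ≤ l ∧ l ≤ r ∧ j = i + (l : ZMod (2 * r + 1))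

/-- The edge relation of the composition `R_{2q+1}(P^1, …, P^{2q+1})` of the tournaments
`relP i` over the highly regular tournament `R_{2q+1}`: inside a block use the block's
relation, between different blocks use the highly regular relation on the indices. -/
def compTournRel (q : ℕ) {V : ZMod (2 * q + 1) → Type*} (relP : ∀ i, V i → V i → Prop)
    (u v : Σ i, V i) : Prop :=
  (∃ h : u.1 = v.1, relP v.1 (h ▸ u.2) v.2) ∨ (u.1 ≠ v.1 ∧ hrRel q u.1 v.1)

/-! An acyclic set `S` of `T` projects to an acyclic set of `R_{2r+1}`. The source `i` of that
projection beats every other index in it, so the projection lies in the arc `{i, …, i + r}`; as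
each block of `S` is acyclic in its `P^j`, this gives `|S| ≤ ∑_{l ≤ r} (d_{i+l} + 1)`. Conversely
the arc is acyclic in `R_{2r+1}`, so taking a maximum acyclic set of each `P^{i+l}` over it gives
an acyclic set of `T` of exactly that size. -/

open Finset

section AcyclicSets

variable {W : Type*}

theorem AcyclicIn.mono {rel : W → W → Prop} {S T : Set W} (hT : AcyclicIn rel T) (hST : S ⊆ T) :
    AcyclicIn rel S :=
  fun a ha b hb c hc => hT a (hST ha) b (hST hb) c (hST hc)

theorem acyclicIn_singleton {rel : W → W → Prop} (v : W) : AcyclicIn rel {v} := by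
  rintro a rfl b rfl c rfl hab -
  exact hab

theorem AcyclicIn.exists_source {rel : W → W → Prop} (ht : IsTournament rel) {B : Finset W}
    (hne : B.Nonempty) (hB : AcyclicIn rel B) : ∃ s ∈ B, ∀ j ∈ B, j ≠ s → rel s j := by
  classical
  induction hne using Finset.Nonempty.cons_induction with
  | singleton a => exact ⟨a, mem_singleton_self a, fun j hj hja => absurd (mem_singleton.mp hj) hja⟩
  | cons a s ha _ ih =>
    obtain ⟨t, hts, ht_src⟩ := ih (hB.mono (by simp))
    have hat : a ≠ t := fun h => ha (h ▸ hts)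
    by_cases hrel : rel a t
    · refine ⟨a, mem_cons_self a s, fun j hj hja => ?_⟩
      have hjs : j ∈ s := (mem_cons.mp hj).resolve_left hja
      rcases eq_or_ne j t with rfl | hjt
      · exact hrel
      · exact hB a (by simp) t (by simp [hts]) j (by simp [hjs]) hrel (ht_src j hjs hjt)
    · refine ⟨t, mem_cons.mpr (Or.inr hts), fun j hj hjt => ?_⟩
      rcases mem_cons.mp hj with rfl | hjs
      · exact (ht.2 t j hat.symm).mpr hrel
      · exact ht_src j hjs hjt

variable (rel : W → W → Prop)

def acyclicCards : Set ℕ := {n : ℕ | ∃ S : Finset W, AcyclicIn rel ↑S ∧ S.card = n}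

noncomputable def maxAcyclicCard : ℕ := sSup (acyclicCards rel)

theorem acyDim_eq_maxAcyclicCard_sub_one : acyDim rel = maxAcyclicCard rel - 1 := rfl

variable [Fintype W]

theorem bddAbove_acyclicCards : BddAbove (acyclicCards rel) :=
  ⟨Fintype.card W, by rintro _ ⟨S, -, rfl⟩; exact card_le_univ S⟩

theorem card_le_maxAcyclicCard {S : Finset W} (hS : AcyclicIn rel S) :
    S.card ≤ maxAcyclicCard rel :=
  le_csSup (bddAbove_acyclicCards rel) ⟨S, hS, rfl⟩

theorem exists_acyclicIn_card_eq_maxAcyclicCard :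
    ∃ S : Finset W, AcyclicIn rel S ∧ S.card = maxAcyclicCard rel :=
  Nat.sSup_mem (s := acyclicCards rel) ⟨0, ∅, by simp [AcyclicIn], rfl⟩ (bddAbove_acyclicCards rel)

theorem acyDim_add_one [Nonempty W] : acyDim rel + 1 = maxAcyclicCard rel := by
  obtain ⟨v⟩ := ‹Nonempty W›
  have h := card_le_maxAcyclicCard rel (S := {v}) (by simpa using acyclicIn_singleton v)
  rw [card_singleton] at h
  rw [acyDim_eq_maxAcyclicCard_sub_one]
  omega

end AcyclicSets

section HighlyRegular

variable {r : ℕ}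

theorem natCast_inj_of_le_two_mul {l l' : ℕ} (hl : l ≤ 2 * r) (hl' : l' ≤ 2 * r)
    (h : (l : ZMod (2 * r + 1)) = l') : l = l' := by
  have := congrArg ZMod.val h
  rwa [ZMod.val_cast_of_lt (by omega), ZMod.val_cast_of_lt (by omega)] at this

theorem hrRel_asymm {i j : ZMod (2 * r + 1)} (hij : hrRel r i j) : ¬ hrRel r j i := by
  rintro ⟨l', hl1', hl2', rfl⟩
  obtain ⟨l, hl1, hl2, hl⟩ := hij
  have : ((l + l' : ℕ) : ZMod (2 * r + 1)) = 0 := by push_cast; linear_combination -hl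
  rw [ZMod.natCast_eq_zero_iff] at this
  have := Nat.le_of_dvd (by omega) this
  omega

theorem hrRel_irrefl (i : ZMod (2 * r + 1)) : ¬ hrRel r i i := fun h => hrRel_asymm h h

theorem hrRel_or_hrRel_of_ne {i j : ZMod (2 * r + 1)} (h : i ≠ j) :
    hrRel r i j ∨ hrRel r j i := by
  set k := (j - i).val with hk
  have hk_lt : k < 2 * r + 1 := ZMod.val_lt _
  have hk_pos : 0 < k := Nat.pos_of_ne_zero fun h0 => h ((sub_eq_zero.mp ((ZMod.val_eq_zero _).mp h0)).symm)
  have hj : j = i + (k : ZMod (2 * r + 1)) := by rw [hk, ZMod.natCast_zmod_val]; ring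
  rcases le_or_gt k r with hle | hlt
  · exact Or.inl ⟨k, hk_pos, hle, hj⟩
  · refine Or.inr ⟨2 * r + 1 - k, by omega, by omega, ?_⟩
    rw [hj, Nat.cast_sub hk_lt.le]
    simp

theorem isTournament_hrRel (r : ℕ) : IsTournament (hrRel r) :=
  ⟨hrRel_irrefl, fun _ _ hij => ⟨hrRel_asymm, (hrRel_or_hrRel_of_ne hij).resolve_right⟩⟩

theorem hrRel_add_natCast_iff (i : ZMod (2 * r + 1)) {l₁ l₂ : ℕ} (h₁ : l₁ ≤ r) (h₂ : l₂ ≤ r) :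
    hrRel r (i + l₁) (i + l₂) ↔ l₁ < l₂ := by
  constructor
  · rintro ⟨l, hl1, hl2, hl⟩
    have : ((l₂ : ℕ) : ZMod (2 * r + 1)) = ((l₁ + l : ℕ) : ZMod (2 * r + 1)) := by
      push_cast; linear_combination hl
    have := natCast_inj_of_le_two_mul (by omega) (by omega) this
    omega
  · intro hlt
    refine ⟨l₂ - l₁, by omega, by omega, ?_⟩
    rw [Nat.cast_sub hlt.le]
    ring

def arc (r : ℕ) (i : ZMod (2 * r + 1)) : Finset (ZMod (2 * r + 1)) :=
  (range (r + 1)).image fun l : ℕ => i + l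

theorem mem_arc {i j : ZMod (2 * r + 1)} : j ∈ arc r i ↔ ∃ l ≤ r, i + l = j := by
  simp only [arc, mem_image, mem_range, Order.lt_add_one_iff]

theorem sum_arc {M : Type*} [AddCommMonoid M] (i : ZMod (2 * r + 1)) (f : ZMod (2 * r + 1) → M) :
    ∑ j ∈ arc r i, f j = ∑ l ∈ range (r + 1), f (i + l) := by
  refine sum_image fun x hx y hy h => natCast_inj_of_le_two_mul ?_ ?_ (add_left_cancel h)
  · have := mem_range.mp hx; omega
  · have := mem_range.mp hy; omega

theorem acyclicIn_arc (i : ZMod (2 * r + 1)) : AcyclicIn (hrRel r) (arc r i) := by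
  intro a ha b hb c hc hab hbc
  obtain ⟨la, hla, rfl⟩ := mem_arc.mp ha
  obtain ⟨lb, hlb, rfl⟩ := mem_arc.mp hb
  obtain ⟨lc, hlc, rfl⟩ := mem_arc.mp hc
  rw [hrRel_add_natCast_iff i hla hlb] at hab
  rw [hrRel_add_natCast_iff i hlb hlc] at hbc
  exact (hrRel_add_natCast_iff i hla hlc).mpr (hab.trans hbc)

theorem exists_subset_arc {B : Finset (ZMod (2 * r + 1))} (hne : B.Nonempty)
    (hB : AcyclicIn (hrRel r) B) : ∃ i, B ⊆ arc r i := by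
  obtain ⟨i, hi, hsrc⟩ := hB.exists_source (isTournament_hrRel r) hne
  refine ⟨i, fun j hj => mem_arc.mpr ?_⟩
  rcases eq_or_ne j i with rfl | hji
  · exact ⟨0, r.zero_le, by simp⟩
  · obtain ⟨l, -, hl, rfl⟩ := hsrc j hj hji
    exact ⟨l, hl, rfl⟩

end HighlyRegular

section Composition

variable {r : ℕ} {V : ZMod (2 * r + 1) → Type*} (relP : ∀ i, V i → V i → Prop)

theorem AcyclicIn.image_fst {S : Set (Σ i, V i)} (hS : AcyclicIn (compTournRel r relP) S) :
    AcyclicIn (hrRel r) (Sigma.fst '' S) := by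
  rintro _ ⟨u, hu, rfl⟩ _ ⟨v, hv, rfl⟩ _ ⟨w, hw, rfl⟩ huv hvw
  have huv' : u.1 ≠ v.1 := fun h => hrRel_irrefl _ (h ▸ huv)
  have hvw' : v.1 ≠ w.1 := fun h => hrRel_irrefl _ (h ▸ hvw)
  have huw' : u.1 ≠ w.1 := fun h => hrRel_asymm huv (h ▸ hvw)
  rcases hS u hu v hv w hw (Or.inr ⟨huv', huv⟩) (Or.inr ⟨hvw', hvw⟩) with ⟨h, _⟩ | ⟨_, h⟩
  · exact absurd h huw'
  · exact h

theorem AcyclicIn.preimage_mk {S : Set (Σ i, V i)} (hS : AcyclicIn (compTournRel r relP) S)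
    (i : ZMod (2 * r + 1)) : AcyclicIn (relP i) (Sigma.mk i ⁻¹' S) := by
  intro a ha b hb c hc hab hbc
  rcases hS _ ha _ hb _ hc (Or.inl ⟨rfl, hab⟩) (Or.inl ⟨rfl, hbc⟩) with ⟨_, h⟩ | ⟨hne, _⟩
  · exact h
  · exact absurd rfl hne

theorem AcyclicIn.sigma {I : Set (ZMod (2 * r + 1))} {A : ∀ i, Set (V i)}
    (hI : AcyclicIn (hrRel r) I) (hA : ∀ i, AcyclicIn (relP i) (A i)) :
    AcyclicIn (compTournRel r relP) (I.sigma A) := by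
  rintro ⟨i, x⟩ ⟨hi, hx⟩ ⟨j, y⟩ ⟨hj, hy⟩ ⟨k, z⟩ ⟨hk, hz⟩ hxy hyz
  rcases hxy with ⟨hij, hxy⟩ | ⟨hij, hxy⟩ <;> rcases hyz with ⟨hjk, hyz⟩ | ⟨hjk, hyz⟩
  · dsimp only at hij hjk
    subst hij hjk
    exact Or.inl ⟨rfl, hA i x hx y hy z hz hxy hyz⟩
  · exact Or.inr ⟨hij ▸ hjk, hij ▸ hyz⟩
  · exact Or.inr ⟨hjk ▸ hij, hjk ▸ hxy⟩
  · have hik := hI i hi j hj k hk hxy hyz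
    exact Or.inr ⟨fun h => hrRel_irrefl k ((show i = k from h) ▸ hik), hik⟩

variable [∀ i, Fintype (V i)]

theorem card_le_of_acyclicIn_compTournRel {S : Finset (Σ i, V i)}
    (hS : AcyclicIn (compTournRel r relP) S) :
    S.card ≤ univ.sup fun i : ZMod (2 * r + 1) =>
      ∑ l ∈ range (r + 1), maxAcyclicCard (relP (i + l)) := by
  rcases S.eq_empty_or_nonempty with rfl | hne
  · simp
  obtain ⟨i, hi⟩ := exists_subset_arc (hne.image Sigma.fst) (by
    rw [coe_image]; exact hS.image_fst relP)
  calc S.card = ∑ j ∈ arc r i, (S.preimage (Sigma.mk j) sigma_mk_injective.injOn).card := by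
        rw [← card_sigma, sigma_preimage_mk_of_subset S hi]
    _ ≤ ∑ j ∈ arc r i, maxAcyclicCard (relP j) := sum_le_sum fun j _ =>
        card_le_maxAcyclicCard _ (by rw [coe_preimage]; exact hS.preimage_mk relP j)
    _ = ∑ l ∈ range (r + 1), maxAcyclicCard (relP (i + l)) := sum_arc i _
    _ ≤ _ := le_sup (f := fun i : ZMod (2 * r + 1) =>
        ∑ l ∈ range (r + 1), maxAcyclicCard (relP (i + l))) (mem_univ i)

theorem exists_acyclicIn_compTournRel_card_eq (i : ZMod (2 * r + 1)) :
    ∃ S : Finset (Σ i, V i), AcyclicIn (compTournRel r relP) S ∧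
      S.card = ∑ l ∈ range (r + 1), maxAcyclicCard (relP (i + l)) := by
  choose A hA hcard using fun j => exists_acyclicIn_card_eq_maxAcyclicCard (relP j)
  refine ⟨(arc r i).sigma A, ?_, ?_⟩
  · rw [coe_sigma]
    exact (acyclicIn_arc i).sigma relP hA
  · rw [card_sigma, sum_arc]
    simp only [hcard]

theorem maxAcyclicCard_compTournRel :
    maxAcyclicCard (compTournRel r relP) = univ.sup fun i : ZMod (2 * r + 1) =>
      ∑ l ∈ range (r + 1), maxAcyclicCard (relP (i + l)) := by
  refine le_antisymm ?_ (Finset.sup_le fun i _ => ?_)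
  · obtain ⟨S, hS, hcard⟩ := exists_acyclicIn_card_eq_maxAcyclicCard (compTournRel r relP)
    exact hcard ▸ card_le_of_acyclicIn_compTournRel relP hS
  · obtain ⟨S, hS, hcard⟩ := exists_acyclicIn_compTournRel_card_eq relP i
    exact hcard ▸ card_le_maxAcyclicCard _ hS

end Composition

theorem stmt7_general (r : ℕ) (V : ZMod (2 * r + 1) → Type)
    [∀ i, Fintype (V i)] [∀ i, Nonempty (V i)]
    (relP : ∀ i, V i → V i → Prop) :
    acyDim (compTournRel r relP) =
      Finset.univ.sup (fun i : ZMod (2 * r + 1) =>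
        (∑ l ∈ Finset.range (r + 1), acyDim (relP (i + (l : ZMod (2 * r + 1))))) + r) := by
  have hsum : ∀ i : ZMod (2 * r + 1), ∑ l ∈ range (r + 1), maxAcyclicCard (relP (i + l)) =
      (∑ l ∈ range (r + 1), acyDim (relP (i + l))) + r + 1 := by
    intro i
    simp only [← acyDim_add_one, sum_add_distrib, sum_const, card_range, smul_eq_mul, mul_one]
    ring
  rw [acyDim_eq_maxAcyclicCard_sub_one, maxAcyclicCard_compTournRel, sup_congr rfl fun i _ => hsum i,
    ← Finset.sup_add univ_nonempty, Nat.add_sub_cancel]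

/-- Let `T = R_{2r+1}(P^1, …, P^{2r+1})` with `r ≥ 1` and `dim(P^i) = d_i`. Then
`dim(T) = max_i (d_i + d_{i+1} + … + d_{i+r} + r)`, indices mod `2r+1`. -/
theorem stmt7 (r : ℕ) (hr : 1 ≤ r) (V : ZMod (2 * r + 1) → Type)
    [∀ i, Fintype (V i)] [∀ i, Nonempty (V i)]
    (relP : ∀ i, V i → V i → Prop) (htour : ∀ i, IsTournament (relP i)) :
    acyDim (compTournRel r relP) =
      Finset.univ.sup (fun i : ZMod (2 * r + 1) =>
        (∑ l ∈ Finset.range (r + 1), acyDim (relP (i + (l : ZMod (2 * r + 1))))) + r) :=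
  stmt7_general r V relP
end
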